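/- (Binet formula for even indices) Let α and β be the roots of x² − ab·x − 2ab = 0 with a, b > 0, i.e., α = (ab + √(a²b² + 8ab))/2 and β = (ab − √(a²b² + 8ab))/2. Then for every n ≥ 0, j_{2n} = (a/(ab)^n)·(α^{2n} − β^{2n})/(α − β). -/

import Mathlib

noncomputable def jj (a b : ℝ) : ℕ → ℝ
  | 0 => 0
  | 1 => 1
  | n + 2 => (if Even (n + 2) then a else b) * jj a b (n + 1) + 2 * jj a b n

/-!
Eliminating the odd terms gives `j_{2n+4} = (ab+4) j_{2n+2} - 4 j_{2n}`, so
`K_n = (ab)^n j_{2n}` satisfies `K_{n+2} = ab(ab+4) K_{n+1} - 4(ab)^2 K_n`. Since `α, β` are the roots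
of `t² = ab t + 2ab`, their squares are the roots of `t² = ab(ab+4) t - 4(ab)²`, so
`a (α^{2n} - β^{2n}) / (α - β)` satisfies the same recurrence; both sequences start with `0, a²b`.
-/

section LinearRecurrence

variable {R : Type*} [CommRing R]

theorem linear_recurrence_ext {p q : R} {u v : ℕ → R}
    (hu : ∀ n, u (n + 2) = p * u (n + 1) - q * u n)
    (hv : ∀ n, v (n + 2) = p * v (n + 1) - q * v n)
    (h0 : u 0 = v 0) (h1 : u 1 = v 1) : u = v := by
  funext n
  induction n using Nat.twoStepInduction with
  | zero => exact h0
  | one => exact h1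
  | more n ih₀ ih₁ => rw [hu, hv, ih₀, ih₁]

theorem pow_add_two_of_sq_eq {x p q : R} (hx : x ^ 2 = p * x - q) (n : ℕ) :
    x ^ (n + 2) = p * x ^ (n + 1) - q * x ^ n := by
  linear_combination x ^ n * hx

theorem sq_pow_add_two_of_sq_eq {x s r : R} (hx : x ^ 2 = s * x + r) (n : ℕ) :
    (x ^ 2) ^ (n + 2) = (s ^ 2 + 2 * r) * (x ^ 2) ^ (n + 1) - r ^ 2 * (x ^ 2) ^ n :=
  pow_add_two_of_sq_eq (by linear_combination (x ^ 2 + s * x - r) * hx) n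

end LinearRecurrence

theorem sq_eq_of_eq_add_or_sub_div_two {K : Type*} [Field K] [NeZero (2 : K)] {c d s x : K}
    (hs : s ^ 2 = c ^ 2 + 4 * d) (hx : x = (c + s) / 2 ∨ x = (c - s) / 2) :
    x ^ 2 = c * x + d := by
  rcases hx with rfl | rfl <;>
  · field_simp
    linear_combination hs

theorem jj_two_mul_add_two (a b : ℝ) (n : ℕ) :
    jj a b (2 * (n + 2)) = (a * b + 4) * jj a b (2 * (n + 1)) - 4 * jj a b (2 * n) := by
  have hodd : jj a b (2 * n + 3) = b * jj a b (2 * n + 2) + 2 * jj a b (2 * n + 1) := by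
    rw [jj, if_neg (by rw [Nat.not_even_iff_odd]; exact ⟨n + 1, by ring⟩)]
  have heven : ∀ m, jj a b (2 * m + 2) = a * jj a b (2 * m + 1) + 2 * jj a b (2 * m) := fun m => by
    rw [jj, if_pos ⟨m + 1, by ring⟩]
  rw [show 2 * (n + 2) = 2 * (n + 1) + 2 by ring, heven, show 2 * (n + 1) + 1 = 2 * n + 3 by ring,
    hodd, show 2 * (n + 1) = 2 * n + 2 by ring, heven]
  ring

theorem stmt7 (a b : ℝ) (ha : 0 < a) (hb : 0 < b) (n : ℕ)
    (α β : ℝ)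
    (hα : α = (a * b + Real.sqrt (a ^ 2 * b ^ 2 + 8 * a * b)) / 2)
    (hβ : β = (a * b - Real.sqrt (a ^ 2 * b ^ 2 + 8 * a * b)) / 2) :
    jj a b (2 * n) = a / (a * b) ^ n * ((α ^ (2 * n) - β ^ (2 * n)) / (α - β)) := by
  set s := Real.sqrt (a ^ 2 * b ^ 2 + 8 * a * b)
  have hab : 0 < a * b := mul_pos ha hb
  have hs : s ^ 2 = (a * b) ^ 2 + 4 * (2 * (a * b)) := by
    rw [Real.sq_sqrt (by positivity)]; ring
  have hαβ : α - β ≠ 0 := by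
    rw [show α - β = s by rw [hα, hβ]; ring]
    positivity
  have hαr := sq_pow_add_two_of_sq_eq (sq_eq_of_eq_add_or_sub_div_two hs (.inl hα))
  have hβr := sq_pow_add_two_of_sq_eq (sq_eq_of_eq_add_or_sub_div_two hs (.inr hβ))
  have hsum : α + β = a * b := by rw [hα, hβ]; ring
  have key := congrFun (linear_recurrence_ext
    (p := (a * b) ^ 2 + 2 * (2 * (a * b))) (q := (2 * (a * b)) ^ 2)
    (u := fun m => (a * b) ^ m * jj a b (2 * m))
    (v := fun m => a / (α - β) * ((α ^ 2) ^ m - (β ^ 2) ^ m))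
    (fun m => by rw [jj_two_mul_add_two]; ring)
    (fun m => by rw [hαr, hβr]; ring)
    (by simp [jj])
    (by
      rw [pow_one, pow_one, pow_one, show jj a b (2 * 1) = a by simp [jj],
        show α ^ 2 - β ^ 2 = (α + β) * (α - β) by ring, hsum]
      field_simp)) n
  simp only [← pow_mul] at key
  field_simp at key ⊢
  linear_combination key
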